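/- arXiv:math/0205160 — 7 statements merged into one kernel-verified Lean document; each statement's English description precedes it below -/
import Mathlib

section
/- (Favard-like theorem for biorthogonal polynomials.) Let $\{\pi_n(x)\}$ and $\{\sigma_n(y)\}$ be sequences of polynomials defined by the recurrence relations $x\pi_n(x)=\gamma_n\pi_{n+1}(x)+\sum_{j=0}^n a_j(n)\pi_{n-j}(x)$ and $y\sigma_n(y)=\tilde\gamma_n\sigma_{n+1}(y)+\sum_{j=0}^n b_j(n)\sigma_{n-j}(y)$, with $\pi_0,\sigma_0$ nonzero constants and $\gamma_n\neq 0\neq\tilde\gamma_n$ for all $n\in\mathbb{N}$. Then there exists a unique bilinear moment functional $\mathcal{L}:\mathbb{C}[x]\otimes\mathbb{C}[y]\to\mathbb{C}$ such that $\mathcal{L}(\pi_n|\sigma_m)=\delta_{nm}$ for all $n,m$. -/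
/-!
By strong induction the recurrences force `deg π_n = deg σ_n = n`: in
`γ_n π_{n+1} = x π_n - ∑_j a_j(n) π_{n-j}` the sum has degree at most `n`. Hence both sequences
are bases of `ℂ[X]`, and a bilinear functional may be prescribed freely on a pair of bases.
-/

open Polynomial Module

theorem LinearMap.existsUnique_apply_basis_apply_basis {ι κ R M N : Type*} [CommSemiring R]
    [AddCommMonoid M] [AddCommMonoid N] [Module R M] [Module R N]
    (b₁ : Basis ι R M) (b₂ : Basis κ R N) (f : ι → κ → R) :
    ∃! L : M →ₗ[R] N →ₗ[R] R, ∀ i j, L (b₁ i) (b₂ j) = f i j := by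
  refine ⟨b₁.constr R fun i => b₂.constr R (f i), fun i j => by simp, fun L hL => ?_⟩
  exact LinearMap.ext_basis b₁ b₂ fun i j => by simp [hL]

namespace Polynomial

theorem degree_eq_of_recurrence {R : Type*} [Ring R] [IsDomain R] {P : ℕ → R[X]}
    {γ : ℕ → R} {a : ℕ → ℕ → R} (hP0 : (P 0).degree = 0) (hγ : ∀ n, γ n ≠ 0)
    (hrec : ∀ n, X * P n =
      C (γ n) * P (n + 1) + ∑ j ∈ Finset.range (n + 1), C (a n j) * P (n - j)) (n : ℕ) :
    (P n).degree = n := by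
  induction n using Nat.strong_induction_on with
  | _ n ih =>
    obtain _ | n := n
    · exact hP0
    have hXP : (X * P n).degree = ↑(n + 1) := by
      rw [X_mul, degree_mul_X, ih n n.lt_succ_self]
      norm_cast
    have hsum : (∑ j ∈ Finset.range (n + 1), C (a n j) * P (n - j)).degree < ↑(n + 1) := by
      rw [← mem_degreeLT]
      refine Submodule.sum_mem _ fun j _ => ?_
      rw [← smul_eq_C_mul]
      refine Submodule.smul_mem _ _ (mem_degreeLT.2 ?_)
      rw [ih (n - j) (by omega)]
      exact_mod_cast Nat.lt_succ_of_le (Nat.sub_le n j)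
    rw [← degree_C_mul (hγ n), eq_sub_of_add_eq (hrec n).symm,
      degree_sub_eq_left_of_degree_lt (hXP ▸ hsum), hXP]

noncomputable def Sequence.basisOfField {K : Type*} [Field K] (S : Sequence K) :
    Basis ℕ K K[X] :=
  S.basis fun i => (leadingCoeff_ne_zero.2 (S.ne_zero i)).isUnit

@[simp]
theorem Sequence.basisOfField_apply {K : Type*} [Field K] (S : Sequence K) (i : ℕ) :
    S.basisOfField i = S i :=
  S.basis_eq_self _ i

end Polynomial

/-- Favard-like theorem for biorthogonal polynomials: two sequences of
polynomials defined by the recurrences `x P_n = γ_n P_{n+1} + ∑_{j=0}^n a_j(n) P_{n-j}`,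
`y S_n = γ'_n S_{n+1} + ∑_{j=0}^n b_j(n) S_{n-j}`, with nonzero constant initial terms
and `γ_n ≠ 0 ≠ γ'_n`, are biorthogonal for a unique bilinear moment functional. -/
theorem stmt_3 (P S : ℕ → Polynomial ℂ) (γ γ' : ℕ → ℂ) (a b : ℕ → ℕ → ℂ) (c c' : ℂ)
    (hc : c ≠ 0) (hc' : c' ≠ 0) (hP0 : P 0 = C c) (hS0 : S 0 = C c')
    (hγ : ∀ n, γ n ≠ 0) (hγ' : ∀ n, γ' n ≠ 0)
    (hrecP : ∀ n, X * P n =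
      C (γ n) * P (n + 1) + ∑ j ∈ Finset.range (n + 1), C (a n j) * P (n - j))
    (hrecS : ∀ n, X * S n =
      C (γ' n) * S (n + 1) + ∑ j ∈ Finset.range (n + 1), C (b n j) * S (n - j)) :
    ∃! L : Polynomial ℂ →ₗ[ℂ] Polynomial ℂ →ₗ[ℂ] ℂ,
      ∀ n m, L (P n) (S m) = if n = m then 1 else 0 := by
  let seqP : Sequence ℂ :=
    ⟨P, degree_eq_of_recurrence (by rw [hP0, degree_C hc]) hγ hrecP⟩
  let seqS : Sequence ℂ :=
    ⟨S, degree_eq_of_recurrence (by rw [hS0, degree_C hc']) hγ' hrecS⟩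
  simpa using LinearMap.existsUnique_apply_basis_apply_basis seqP.basisOfField
    seqS.basisOfField fun n m => if n = m then (1 : ℂ) else 0
end

section
/- The differential operators $L_1:=(\partial_z+w)B_2(\partial_w)-A_2(\partial_w)$ and $L_2:=(\partial_w+z)B_1(\partial_z)-A_1(\partial_z)$, acting on smooth functions of $(z,w)$, commute: $[L_1,L_2]=0$. -/
/-!
Write `a = ∂z + w` and `b = ∂w + z`, so that `L₁ = a B₂(∂w) - A₂(∂w)` and `L₂ = b B₁(∂z) - A₁(∂z)`.
The Weyl relations `[∂z, z] = [∂w, w] = 1` enter `[a, b]` with opposite signs, so `a` and `b`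
commute; moreover `a` commutes with `∂z`, `b` with `∂w`, and `∂z` with `∂w`. Hence every factor
of `L₁` commutes with every factor of `L₂`.
-/

open MvPolynomial Polynomial

theorem Commute.aeval_right {R A : Type*} [CommSemiring R] [Semiring A] [Algebra R A] {x y : A}
    (h : Commute x y) (p : R[X]) : Commute x (aeval y p) := by
  induction p using Polynomial.induction_on' with
  | add p q hp hq => simpa using hp.add_right hq
  | monomial n c =>
    rw [Polynomial.aeval_monomial]
    exact (Algebra.commute_algebraMap_left c x).symm.mul_right (h.pow_right n)

theorem Commute.aeval_left {R A : Type*} [CommSemiring R] [Semiring A] [Algebra R A] {x y : A}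
    (h : Commute x y) (p : R[X]) : Commute (aeval x p) y :=
  (h.symm.aeval_right p).symm

theorem commute_add_add_of_mul_eq_mul_add_one {A : Type*} [Semiring A] {x u y v : A}
    (hxy : Commute x y) (huv : Commute u v) (hxv : x * v = v * x + 1)
    (hyu : y * u = u * y + 1) : Commute (x + u) (y + v) := by
  simp only [Commute, SemiconjBy, add_mul, mul_add, hxv, hyu, hxy.eq, huv.eq]
  abel

theorem commute_mul_aeval_sub_aeval {R A : Type*} [CommSemiring R] [Ring A] [Algebra R A]
    {a b x y : A} (hab : Commute a b) (hax : Commute a x) (hyb : Commute y b)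
    (hxy : Commute x y) (p q r s : R[X]) :
    Commute (a * aeval y p - aeval y q) (b * aeval x r - aeval x s) := by
  have hyx (p r : R[X]) : Commute (aeval y p) (aeval x r) := (hxy.symm.aeval_right r).aeval_left p
  refine Commute.sub_left (Commute.sub_right ?_ ?_) (Commute.sub_right ?_ ?_)
  · exact (hab.mul_right (hax.aeval_right r)).mul_left ((hyb.aeval_left p).mul_right (hyx p r))
  · exact (hax.aeval_right s).mul_left (hyx p s)
  · exact (hyb.aeval_left q).mul_right (hyx q r)
  · exact hyx q s

theorem LinearMap.commute_mulLeft_mulLeft {R A : Type*} [CommSemiring R] [CommSemiring A]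
    [Algebra R A] (a b : A) : Commute (mulLeft R a) (mulLeft R b) := by
  ext c
  exact mul_left_comm a b c

namespace MvPolynomial

variable {R σ : Type*} [CommSemiring R]

theorem pderiv_pderiv_comm (i j : σ) (p : MvPolynomial σ R) :
    pderiv i (pderiv j p) = pderiv j (pderiv i p) := by
  classical
  induction p using MvPolynomial.induction_on with
  | C c => simp
  | add p q hp hq => simp [hp, hq]
  | mul_X p n hp =>
    simp only [pderiv_mul, pderiv_X, map_add, Pi.single_apply, apply_ite (pderiv _), pderiv_one,
      map_zero, ite_self, mul_zero, hp]
    ring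

theorem commute_pderiv_pderiv (i j : σ) :
    Commute (pderiv (R := R) i).toLinearMap (pderiv j).toLinearMap :=
  LinearMap.ext (pderiv_pderiv_comm i j)

theorem commute_pderiv_mulLeft_X {i j : σ} (h : i ≠ j) :
    Commute (pderiv (R := R) i).toLinearMap (LinearMap.mulLeft R (X j)) :=
  LinearMap.ext fun p => by simp [pderiv_X_of_ne h.symm]

theorem pderiv_mul_mulLeft_X_self (i : σ) :
    (pderiv (R := R) i).toLinearMap * LinearMap.mulLeft R (X i) =
      LinearMap.mulLeft R (X i) * (pderiv i).toLinearMap + 1 :=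
  LinearMap.ext fun p => by simp [add_comm]

end MvPolynomial

/-- the differential operators `L₁ = (∂z+w)B₂(∂w) - A₂(∂w)` and
`L₂ = (∂w+z)B₁(∂z) - A₁(∂z)` commute (here realized on the space of polynomials in the
two variables `z, w`). -/
theorem stmt_6 (A1 B1 A2 B2 : Polynomial ℂ) :
    letI V := MvPolynomial (Fin 2) ℂ
    letI Dz : Module.End ℂ V := (MvPolynomial.pderiv (0 : Fin 2)).toLinearMap
    letI Dw : Module.End ℂ V := (MvPolynomial.pderiv (1 : Fin 2)).toLinearMap
    letI Mz : Module.End ℂ V := LinearMap.mulLeft ℂ (MvPolynomial.X 0)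
    letI Mw : Module.End ℂ V := LinearMap.mulLeft ℂ (MvPolynomial.X 1)
    letI L1 : Module.End ℂ V :=
      (Dz + Mw) * Polynomial.aeval Dw B2 - Polynomial.aeval Dw A2
    letI L2 : Module.End ℂ V :=
      (Dw + Mz) * Polynomial.aeval Dz B1 - Polynomial.aeval Dz A1
    L1 * L2 = L2 * L1 := by
  have hzw : (0 : Fin 2) ≠ 1 := by decide
  apply Commute.eq
  exact commute_mul_aeval_sub_aeval
    (commute_add_add_of_mul_eq_mul_add_one (commute_pderiv_pderiv 0 1)
      (LinearMap.commute_mulLeft_mulLeft _ _) (pderiv_mul_mulLeft_X_self 0)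
      (pderiv_mul_mulLeft_X_self 1))
    ((Commute.refl _).add_left (commute_pderiv_mulLeft_X hzw).symm)
    ((Commute.refl _).add_right (commute_pderiv_mulLeft_X hzw.symm))
    (commute_pderiv_pderiv 0 1) B2 A2 B1 A1
end

section
/- Let $\mathcal{L}$ be a semiclassical bilinear functional for data $(A_1,B_1,A_2,B_2)$ whose generating function $F(z,w)=\sum_{j,k\geq 0}\frac{z^jw^k}{j!k!}\mu_{jk}$ converges. Then $F$ satisfies the system of PDEs $[(\partial_z+w)B_2(\partial_w)-A_2(\partial_w)]F=0$ and $[(\partial_w+z)B_1(\partial_z)-A_1(\partial_z)]F=0$. -/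
open Polynomial

/-- The space of coefficient arrays `(μ_{jk})`, encoding the formal generating function
`F(z,w) = ∑_{j,k} μ_{jk} z^j w^k / (j! k!)`. -/
abbrev Coeffs : Type := ℕ → ℕ → ℂ

/-- The operator `∂_z` on generating functions, acting on coefficient arrays. -/
noncomputable def Dz : Module.End ℂ Coeffs where
  toFun μ := fun j k => μ (j + 1) k
  map_add' _ _ := rfl
  map_smul' _ _ := rfl

/-- The operator `∂_w` on generating functions, acting on coefficient arrays. -/
noncomputable def Dw : Module.End ℂ Coeffs where
  toFun μ := fun j k => μ j (k + 1)
  map_add' _ _ := rfl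
  map_smul' _ _ := rfl

/-- Multiplication by `z` on generating functions, acting on coefficient arrays. -/
noncomputable def Mz : Module.End ℂ Coeffs where
  toFun μ := fun j k => (j : ℂ) * μ (j - 1) k
  map_add' x y := by funext j k; simp [mul_add]
  map_smul' c x := by funext j k; simp [smul_eq_mul]; ring

/-- Multiplication by `w` on generating functions, acting on coefficient arrays. -/
noncomputable def Mw : Module.End ℂ Coeffs where
  toFun μ := fun j k => (k : ℂ) * μ j (k - 1)
  map_add' x y := by funext j k; simp [mul_add]
  map_smul' c x := by funext j k; simp [smul_eq_mul]; ring

lemma Dw_pow_apply (n : ℕ) (μ : Coeffs) (j k : ℕ) : (Dw ^ n) μ j k = μ j (k + n) := by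
  induction n generalizing μ k with
  | zero => simp
  | succ n ih =>
    rw [pow_succ, Module.End.mul_apply, ih]
    congr 1

lemma Dz_pow_apply (n : ℕ) (μ : Coeffs) (j k : ℕ) : (Dz ^ n) μ j k = μ (j + n) k := by
  induction n generalizing μ j with
  | zero => simp
  | succ n ih =>
    rw [pow_succ, Module.End.mul_apply, ih]
    congr 1

lemma aeval_Dw_apply (L : Polynomial ℂ →ₗ[ℂ] Polynomial ℂ →ₗ[ℂ] ℂ) (q : Polynomial ℂ)
    (j k : ℕ) :
    (Polynomial.aeval Dw q) (fun j k => L (X ^ j) (X ^ k) : Coeffs) j k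
      = L (X ^ j) (q * X ^ k) := by
  induction q using Polynomial.induction_on' with
  | add p r hp hr =>
    rw [map_add, LinearMap.add_apply]
    simp only [Pi.add_apply, hp, hr, add_mul, map_add]
  | monomial n a =>
    rw [Polynomial.aeval_monomial, Module.End.mul_apply]
    have h1 : (monomial n a : Polynomial ℂ) * X ^ k = a • X ^ (k + n) := by
      rw [← C_mul_X_pow_eq_monomial, smul_eq_C_mul]
      ring_nf
    rw [h1, map_smul]
    show (a • ((Dw ^ n) (fun j k => L (X ^ j) (X ^ k) : Coeffs))) j k = _
    simp [Dw_pow_apply]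

lemma aeval_Dz_apply (L : Polynomial ℂ →ₗ[ℂ] Polynomial ℂ →ₗ[ℂ] ℂ) (q : Polynomial ℂ)
    (j k : ℕ) :
    (Polynomial.aeval Dz q) (fun j k => L (X ^ j) (X ^ k) : Coeffs) j k
      = L (q * X ^ j) (X ^ k) := by
  induction q using Polynomial.induction_on' with
  | add p r hp hr =>
    rw [map_add, LinearMap.add_apply]
    simp only [Pi.add_apply, hp, hr, add_mul, map_add, LinearMap.add_apply]
  | monomial n a =>
    rw [Polynomial.aeval_monomial, Module.End.mul_apply]
    have h1 : (monomial n a : Polynomial ℂ) * X ^ j = a • X ^ (j + n) := by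
      rw [← C_mul_X_pow_eq_monomial, smul_eq_C_mul]
      ring_nf
    rw [h1, map_smul]
    show (a • ((Dz ^ n) (fun j k => L (X ^ j) (X ^ k) : Coeffs))) j k = _
    simp [Dz_pow_apply]

/-- the generating function `F(z,w) = ∑ μ_{jk} z^j w^k/(j!k!)` of a
semiclassical bilinear functional satisfies (as a formal power series, encoded by its
coefficient array) the PDEs `[(∂z+w)B₂(∂w)-A₂(∂w)]F = 0` and
`[(∂w+z)B₁(∂z)-A₁(∂z)]F = 0`. -/
theorem stmt_7 (L : Polynomial ℂ →ₗ[ℂ] Polynomial ℂ →ₗ[ℂ] ℂ)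
    (A1 B1 A2 B2 : Polynomial ℂ)
    (hsemi1 : ∀ p s : Polynomial ℂ,
      L (-(B1 * derivative p) + A1 * p) s = L (B1 * p) (X * s))
    (hsemi2 : ∀ p s : Polynomial ℂ,
      L p (-(B2 * derivative s) + A2 * s) = L (X * p) (B2 * s)) :
    letI F : Coeffs := fun j k => L (X ^ j) (X ^ k)
    ((Dz + Mw) * Polynomial.aeval Dw B2 - Polynomial.aeval Dw A2) F = 0 ∧
    ((Dw + Mz) * Polynomial.aeval Dz B1 - Polynomial.aeval Dz A1) F = 0 := by
  constructor
  · funext j k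
    have key := hsemi2 (X ^ j) (X ^ k)
    have hX : (X : Polynomial ℂ) * X ^ j = X ^ (j + 1) := by rw [pow_succ]; ring
    have hder : derivative (X ^ k : Polynomial ℂ) = (k : ℂ) • X ^ (k - 1) := by
      rw [derivative_X_pow, smul_eq_C_mul]
    rw [hX, hder] at key
    have key2 : -((k : ℂ) * L (X ^ j) (B2 * X ^ (k - 1))) + L (X ^ j) (A2 * X ^ k)
        = L (X ^ (j + 1)) (B2 * X ^ k) := by
      rw [← key, mul_smul_comm, map_add, map_neg, map_smul, smul_eq_mul]
    simp only [LinearMap.sub_apply, Module.End.mul_apply, LinearMap.add_apply,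
      Pi.sub_apply, Pi.add_apply, Pi.zero_apply]
    rw [show (Dz ((Polynomial.aeval Dw B2) fun j k => L (X ^ j) (X ^ k))) j k
        = ((Polynomial.aeval Dw B2) fun j k => L (X ^ j) (X ^ k) : Coeffs) (j + 1) k from rfl]
    rw [show (Mw ((Polynomial.aeval Dw B2) fun j k => L (X ^ j) (X ^ k))) j k
        = (k : ℂ) * ((Polynomial.aeval Dw B2) fun j k => L (X ^ j) (X ^ k) : Coeffs) j (k - 1)
        from rfl]
    rw [aeval_Dw_apply, aeval_Dw_apply, aeval_Dw_apply]
    linear_combination -key2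
  · funext j k
    have key := hsemi1 (X ^ j) (X ^ k)
    have hX : (X : Polynomial ℂ) * X ^ k = X ^ (k + 1) := by rw [pow_succ]; ring
    have hder : derivative (X ^ j : Polynomial ℂ) = (j : ℂ) • X ^ (j - 1) := by
      rw [derivative_X_pow, smul_eq_C_mul]
    rw [hX, hder] at key
    have key2 : -((j : ℂ) * L (B1 * X ^ (j - 1)) (X ^ k)) + L (A1 * X ^ j) (X ^ k)
        = L (B1 * X ^ j) (X ^ (k + 1)) := by
      rw [← key, mul_smul_comm, map_add, map_neg, map_smul]
      simp [LinearMap.add_apply, LinearMap.neg_apply, LinearMap.smul_apply, smul_eq_mul]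
    simp only [LinearMap.sub_apply, Module.End.mul_apply, LinearMap.add_apply,
      Pi.sub_apply, Pi.add_apply, Pi.zero_apply]
    rw [show (Dw ((Polynomial.aeval Dz B1) fun j k => L (X ^ j) (X ^ k))) j k
        = ((Polynomial.aeval Dz B1) fun j k => L (X ^ j) (X ^ k) : Coeffs) j (k + 1) from rfl]
    rw [show (Mz ((Polynomial.aeval Dz B1) fun j k => L (X ^ j) (X ^ k))) j k
        = (j : ℂ) * ((Polynomial.aeval Dz B1) fun j k => L (X ^ j) (X ^ k) : Coeffs) (j - 1) k
        from rfl]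
    rw [aeval_Dz_apply, aeval_Dz_apply, aeval_Dz_apply]
    linear_combination -key2
end

section
/- Let $A_i,B_i$ satisfy $\deg B_i+1\leq\deg A_i$ for $i=1,2$ (with the nondegeneracy determinant condition in the borderline case). Then the recurrence relations $\sum_{j=0}^{b_1+1}\beta_1(j)\mu_{n+j,m+1}=-n\sum_j\beta_1(j)\mu_{n-1+j,m}+\sum_{j=0}^{a_1+1}\alpha_1(j)\mu_{n+j,m}$ and its counterpart in the second index determine a semiclassical bilinear functional $\mathcal{L}$ uniquely from the finitely many initial bimoments $\mu_{ij}$ with $0\leq i\leq a_1$, $0\leq j\leq a_2$. -/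
open Polynomial

/-- A polynomial `∑_{j=0}^{n} c_j X^j` given by its list of coefficients. -/
noncomputable def polyOf (n : ℕ) (c : ℕ → ℂ) : Polynomial ℂ :=
  ∑ j ∈ Finset.range (n + 1), C (c j) * X ^ j

private lemma sc_L_polyOf_mul_left (L : Polynomial ℂ →ₗ[ℂ] Polynomial ℂ →ₗ[ℂ] ℂ)
    (N : ℕ) (c : ℕ → ℂ) (n : ℕ) (q : Polynomial ℂ) :
    L (polyOf N c * X ^ n) q = ∑ j ∈ Finset.range (N + 1), c j * L (X ^ (n + j)) q := by
  rw [polyOf, Finset.sum_mul, map_sum, LinearMap.sum_apply]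
  refine Finset.sum_congr rfl fun j hj => ?_
  rw [mul_assoc, ← pow_add, ← Polynomial.smul_eq_C_mul, map_smul, LinearMap.smul_apply,
    smul_eq_mul, add_comm j n]

private lemma sc_L_polyOf_mul_right (L : Polynomial ℂ →ₗ[ℂ] Polynomial ℂ →ₗ[ℂ] ℂ)
    (N : ℕ) (c : ℕ → ℂ) (m : ℕ) (p : Polynomial ℂ) :
    L p (polyOf N c * X ^ m) = ∑ j ∈ Finset.range (N + 1), c j * L p (X ^ (m + j)) := by
  rw [polyOf, Finset.sum_mul, map_sum]
  refine Finset.sum_congr rfl fun j hj => ?_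
  rw [mul_assoc, ← pow_add, ← Polynomial.smul_eq_C_mul, map_smul, smul_eq_mul, add_comm j m]

private lemma sc_E1 (a1 b1 : ℕ) (α1 β1 : ℕ → ℂ)
    (L : Polynomial ℂ →ₗ[ℂ] Polynomial ℂ →ₗ[ℂ] ℂ)
    (hL1 : ∀ p s : Polynomial ℂ,
      L (-(polyOf (b1 + 1) β1 * derivative p) + polyOf (a1 + 1) α1 * p) s =
        L (polyOf (b1 + 1) β1 * p) (X * s)) (n m : ℕ) :
    ∑ j ∈ Finset.range (a1 + 2), α1 j * L (X ^ (n + j)) (X ^ m)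
      = (n : ℂ) * ∑ j ∈ Finset.range (b1 + 2), β1 j * L (X ^ (n - 1 + j)) (X ^ m)
        + ∑ j ∈ Finset.range (b1 + 2), β1 j * L (X ^ (n + j)) (X ^ (m + 1)) := by
  have h := hL1 (X ^ n) (X ^ m)
  simp only [map_add, map_neg, LinearMap.add_apply, LinearMap.neg_apply] at h
  rw [Polynomial.derivative_X_pow,
    mul_left_comm (polyOf (b1 + 1) β1) (C (n : ℂ)) (X ^ (n - 1)),
    ← Polynomial.smul_eq_C_mul, map_smul, LinearMap.smul_apply, smul_eq_mul, ← pow_succ',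
    sc_L_polyOf_mul_left, sc_L_polyOf_mul_left, sc_L_polyOf_mul_left] at h
  linear_combination h

private lemma sc_E2 (a2 b2 : ℕ) (α2 β2 : ℕ → ℂ)
    (L : Polynomial ℂ →ₗ[ℂ] Polynomial ℂ →ₗ[ℂ] ℂ)
    (hL2 : ∀ p s : Polynomial ℂ,
      L p (-(polyOf (b2 + 1) β2 * derivative s) + polyOf (a2 + 1) α2 * s) =
        L (X * p) (polyOf (b2 + 1) β2 * s)) (n m : ℕ) :
    ∑ j ∈ Finset.range (a2 + 2), α2 j * L (X ^ n) (X ^ (m + j))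
      = (m : ℂ) * ∑ j ∈ Finset.range (b2 + 2), β2 j * L (X ^ n) (X ^ (m - 1 + j))
        + ∑ j ∈ Finset.range (b2 + 2), β2 j * L (X ^ (n + 1)) (X ^ (m + j)) := by
  have h := hL2 (X ^ n) (X ^ m)
  simp only [map_add, map_neg] at h
  rw [Polynomial.derivative_X_pow,
    mul_left_comm (polyOf (b2 + 1) β2) (C (m : ℂ)) (X ^ (m - 1)),
    ← Polynomial.smul_eq_C_mul, map_smul, smul_eq_mul, ← pow_succ',
    sc_L_polyOf_mul_right, sc_L_polyOf_mul_right, sc_L_polyOf_mul_right] at h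
  linear_combination h

private lemma sc_key (a1 b1 a2 b2 : ℕ) (α1 β1 α2 β2 : ℕ → ℂ)
    (hα1 : α1 (a1 + 1) ≠ 0) (hα2 : α2 (a2 + 1) ≠ 0)
    (hdeg1 : b1 + 1 ≤ a1) (hdeg2 : b2 + 1 ≤ a2)
    (hborder : a1 = b1 + 1 → a2 = b2 + 1 →
      α1 (a1 + 1) * α2 (a2 + 1) ≠ β1 (b1 + 1) * β2 (b2 + 1))
    (D : ℕ → ℕ → ℂ)
    (hE1 : ∀ n m : ℕ,
      ∑ j ∈ Finset.range (a1 + 2), α1 j * D (n + j) m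
        = (n : ℂ) * ∑ j ∈ Finset.range (b1 + 2), β1 j * D (n - 1 + j) m
          + ∑ j ∈ Finset.range (b1 + 2), β1 j * D (n + j) (m + 1))
    (hE2 : ∀ n m : ℕ,
      ∑ j ∈ Finset.range (a2 + 2), α2 j * D n (m + j)
        = (m : ℂ) * ∑ j ∈ Finset.range (b2 + 2), β2 j * D n (m - 1 + j)
          + ∑ j ∈ Finset.range (b2 + 2), β2 j * D (n + 1) (m + j))
    (hbox : ∀ i ≤ a1, ∀ j ≤ a2, D i j = 0) :
    ∀ i j, D i j = 0 := by
  have hz : ∀ (α x : ℂ), α ≠ 0 → α * x = 0 → x = 0 := fun α x hα h =>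
    (mul_eq_zero.mp h).resolve_left hα
  suffices H : ∀ s, ∀ i j, i + j = s → D i j = 0 from fun i j => H (i + j) i j rfl
  intro s
  induction s using Nat.strong_induction_on with
  | _ s IH =>
  have IH' : ∀ i j, i + j < s → D i j = 0 := fun i j h => IH _ h i j rfl
  -- reduced on-antidiagonal relations
  have S1 : ∀ n m, n + (a1 + 1) + m = s →
      α1 (a1 + 1) * D (n + (a1 + 1)) m = β1 (b1 + 1) * D (n + (b1 + 1)) (m + 1) := by
    intro n m hs
    have h := hE1 n m
    have eqA : ∑ j ∈ Finset.range (a1 + 2), α1 j * D (n + j) m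
        = (∑ j ∈ Finset.range (a1 + 1), α1 j * D (n + j) m)
          + α1 (a1 + 1) * D (n + (a1 + 1)) m := Finset.sum_range_succ _ _
    have eqC : ∑ j ∈ Finset.range (b1 + 2), β1 j * D (n + j) (m + 1)
        = (∑ j ∈ Finset.range (b1 + 1), β1 j * D (n + j) (m + 1))
          + β1 (b1 + 1) * D (n + (b1 + 1)) (m + 1) := Finset.sum_range_succ _ _
    have z1 : ∑ j ∈ Finset.range (a1 + 1), α1 j * D (n + j) m = 0 :=
      Finset.sum_eq_zero fun j hj => by
        rw [IH' _ _ (by have := Finset.mem_range.mp hj; omega), mul_zero]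
    have z2 : (n : ℂ) * ∑ j ∈ Finset.range (b1 + 2), β1 j * D (n - 1 + j) m = 0 := by
      rcases Nat.eq_zero_or_pos n with h0 | h0
      · simp [h0]
      · rw [Finset.sum_eq_zero, mul_zero]
        intro j hj
        rw [IH' _ _ (by have := Finset.mem_range.mp hj; omega), mul_zero]
    have z3 : ∑ j ∈ Finset.range (b1 + 1), β1 j * D (n + j) (m + 1) = 0 :=
      Finset.sum_eq_zero fun j hj => by
        rw [IH' _ _ (by have := Finset.mem_range.mp hj; omega), mul_zero]
    linear_combination h - eqA + eqC + z2 - z1 + z3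
  have S2 : ∀ n m, n + m + (a2 + 1) = s →
      α2 (a2 + 1) * D n (m + (a2 + 1)) = β2 (b2 + 1) * D (n + 1) (m + (b2 + 1)) := by
    intro n m hs
    have h := hE2 n m
    have eqA : ∑ j ∈ Finset.range (a2 + 2), α2 j * D n (m + j)
        = (∑ j ∈ Finset.range (a2 + 1), α2 j * D n (m + j))
          + α2 (a2 + 1) * D n (m + (a2 + 1)) := Finset.sum_range_succ _ _
    have eqC : ∑ j ∈ Finset.range (b2 + 2), β2 j * D (n + 1) (m + j)
        = (∑ j ∈ Finset.range (b2 + 1), β2 j * D (n + 1) (m + j))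
          + β2 (b2 + 1) * D (n + 1) (m + (b2 + 1)) := Finset.sum_range_succ _ _
    have z1 : ∑ j ∈ Finset.range (a2 + 1), α2 j * D n (m + j) = 0 :=
      Finset.sum_eq_zero fun j hj => by
        rw [IH' _ _ (by have := Finset.mem_range.mp hj; omega), mul_zero]
    have z2 : (m : ℂ) * ∑ j ∈ Finset.range (b2 + 2), β2 j * D n (m - 1 + j) = 0 := by
      rcases Nat.eq_zero_or_pos m with h0 | h0
      · simp [h0]
      · rw [Finset.sum_eq_zero, mul_zero]
        intro j hj
        rw [IH' _ _ (by have := Finset.mem_range.mp hj; omega), mul_zero]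
    have z3 : ∑ j ∈ Finset.range (b2 + 1), β2 j * D (n + 1) (m + j) = 0 :=
      Finset.sum_eq_zero fun j hj => by
        rw [IH' _ _ (by have := Finset.mem_range.mp hj; omega), mul_zero]
    linear_combination h - eqA + eqC + z2 - z1 + z3
  -- vanishing for large first index, by climbing along the antidiagonal
  have U : ∀ d i j, i + j = s → i = a1 + 1 + d → D i j = 0 := by
    intro d
    induction d with
    | zero =>
      intro i j hs hi
      have h1 := S1 0 j (by omega)
      have e1 : 0 + (a1 + 1) = i := by omega
      rw [e1] at h1
      simp only [zero_add] at h1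
      by_cases hb : b1 + 1 + (j + 1) < s
      · rw [IH' _ _ hb, mul_zero] at h1
        exact hz _ _ hα1 h1
      · have hb1 : b1 + 1 = a1 := by omega
        by_cases hj : j + 1 ≤ a2
        · rw [hbox (b1 + 1) (by omega) (j + 1) hj, mul_zero] at h1
          exact hz _ _ hα1 h1
        · have h2 := S2 (b1 + 1) (j - a2) (by omega)
          have e2 : j - a2 + (a2 + 1) = j + 1 := by omega
          rw [e2] at h2
          by_cases hc : (b1 + 1 + 1) + (j - a2 + (b2 + 1)) < s
          · rw [IH' _ _ hc, mul_zero] at h2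
            rw [hz _ _ hα2 h2, mul_zero] at h1
            exact hz _ _ hα1 h1
          · have hb2 : b2 + 1 = a2 := by omega
            have e3 : j - a2 + (b2 + 1) = j := by omega
            have e4 : b1 + 1 + 1 = i := by omega
            rw [e3, e4] at h2
            have hne := hborder (by omega) (by omega)
            have hd : (α1 (a1 + 1) * α2 (a2 + 1) - β1 (b1 + 1) * β2 (b2 + 1)) * D i j = 0 := by
              linear_combination α2 (a2 + 1) * h1 + β1 (b1 + 1) * h2
            exact hz _ _ (sub_ne_zero.mpr hne) hd
    | succ d ihd =>
      intro i j hs hi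
      have h1 := S1 (d + 1) j (by omega)
      have e1 : d + 1 + (a1 + 1) = i := by omega
      rw [e1] at h1
      by_cases hb : (d + 1 + (b1 + 1)) + (j + 1) < s
      · rw [IH' _ _ hb, mul_zero] at h1
        exact hz _ _ hα1 h1
      · have hb1 : b1 + 1 = a1 := by omega
        rw [ihd (d + 1 + (b1 + 1)) (j + 1) (by omega) (by omega), mul_zero] at h1
        exact hz _ _ hα1 h1
  have UU : ∀ i j, i + j = s → a1 + 1 ≤ i → D i j = 0 := fun i j hs hi =>
    U (i - (a1 + 1)) i j hs (by omega)
  -- vanishing for large second index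
  have V : ∀ d i j, i + j = s → a2 + 1 ≤ j → a1 ≤ i + d → D i j = 0 := by
    intro d
    induction d with
    | zero =>
      intro i j hs hj hd
      rcases Nat.lt_or_ge a1 i with h | h
      · exact UU i j hs h
      · have h2 := S2 i (j - (a2 + 1)) (by omega)
        have e2 : j - (a2 + 1) + (a2 + 1) = j := by omega
        rw [e2] at h2
        by_cases hc : (i + 1) + (j - (a2 + 1) + (b2 + 1)) < s
        · rw [IH' _ _ hc, mul_zero] at h2
          exact hz _ _ hα2 h2
        · rw [UU (i + 1) (j - (a2 + 1) + (b2 + 1)) (by omega) (by omega), mul_zero] at h2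
          exact hz _ _ hα2 h2
    | succ d ihd =>
      intro i j hs hj hd
      rcases Nat.lt_or_ge (i + d) a1 with h | h
      · have h2 := S2 i (j - (a2 + 1)) (by omega)
        have e2 : j - (a2 + 1) + (a2 + 1) = j := by omega
        rw [e2] at h2
        by_cases hc : (i + 1) + (j - (a2 + 1) + (b2 + 1)) < s
        · rw [IH' _ _ hc, mul_zero] at h2
          exact hz _ _ hα2 h2
        · have hb2 : b2 + 1 = a2 := by omega
          have e3 : j - (a2 + 1) + (b2 + 1) = j - 1 := by omega
          rw [e3] at h2
          rcases Nat.lt_or_ge a2 (j - 1) with h4 | h4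
          · rw [ihd (i + 1) (j - 1) (by omega) (by omega) (by omega), mul_zero] at h2
            exact hz _ _ hα2 h2
          · rw [hbox (i + 1) (by omega) (j - 1) h4, mul_zero] at h2
            exact hz _ _ hα2 h2
      · exact ihd i j hs hj h
  intro i j hs
  rcases Nat.lt_or_ge a1 i with h | h
  · exact UU i j hs h
  rcases Nat.lt_or_ge a2 j with h' | h'
  · exact V a1 i j hs h' (by omega)
  exact hbox i h j h'

/-- under the degree assumptions (and the borderline nondegeneracy
condition), a semiclassical bilinear functional is uniquely determined by its initial
bimoments `μ_{ij}`, `0 ≤ i ≤ a₁`, `0 ≤ j ≤ a₂`: two semiclassical functionals for the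
same data agreeing on these agree on all bimoments. -/
theorem stmt_9 (a1 b1 a2 b2 : ℕ) (α1 β1 α2 β2 : ℕ → ℂ)
    (hα1 : α1 (a1 + 1) ≠ 0) (hα2 : α2 (a2 + 1) ≠ 0)
    (hdeg1 : b1 + 1 ≤ a1) (hdeg2 : b2 + 1 ≤ a2)
    (hborder : a1 = b1 + 1 → a2 = b2 + 1 →
      α1 (a1 + 1) * α2 (a2 + 1) ≠ β1 (b1 + 1) * β2 (b2 + 1))
    (L L' : Polynomial ℂ →ₗ[ℂ] Polynomial ℂ →ₗ[ℂ] ℂ)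
    (hL1 : ∀ p s : Polynomial ℂ,
      L (-(polyOf (b1 + 1) β1 * derivative p) + polyOf (a1 + 1) α1 * p) s =
        L (polyOf (b1 + 1) β1 * p) (X * s))
    (hL2 : ∀ p s : Polynomial ℂ,
      L p (-(polyOf (b2 + 1) β2 * derivative s) + polyOf (a2 + 1) α2 * s) =
        L (X * p) (polyOf (b2 + 1) β2 * s))
    (hL'1 : ∀ p s : Polynomial ℂ,
      L' (-(polyOf (b1 + 1) β1 * derivative p) + polyOf (a1 + 1) α1 * p) s =
        L' (polyOf (b1 + 1) β1 * p) (X * s))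
    (hL'2 : ∀ p s : Polynomial ℂ,
      L' p (-(polyOf (b2 + 1) β2 * derivative s) + polyOf (a2 + 1) α2 * s) =
        L' (X * p) (polyOf (b2 + 1) β2 * s))
    (hinit : ∀ i ≤ a1, ∀ j ≤ a2, L (X ^ i) (X ^ j) = L' (X ^ i) (X ^ j)) :
    ∀ i j : ℕ, L (X ^ i) (X ^ j) = L' (X ^ i) (X ^ j) := by
  have hE1 : ∀ n m : ℕ,
      ∑ j ∈ Finset.range (a1 + 2),
          α1 j * (L (X ^ (n + j)) (X ^ m) - L' (X ^ (n + j)) (X ^ m))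
        = (n : ℂ) * ∑ j ∈ Finset.range (b1 + 2),
            β1 j * (L (X ^ (n - 1 + j)) (X ^ m) - L' (X ^ (n - 1 + j)) (X ^ m))
          + ∑ j ∈ Finset.range (b1 + 2),
            β1 j * (L (X ^ (n + j)) (X ^ (m + 1)) - L' (X ^ (n + j)) (X ^ (m + 1))) := by
    intro n m
    have h := sc_E1 a1 b1 α1 β1 L hL1 n m
    have h' := sc_E1 a1 b1 α1 β1 L' hL'1 n m
    simp only [mul_sub, Finset.sum_sub_distrib]
    linear_combination h - h'
  have hE2 : ∀ n m : ℕ,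
      ∑ j ∈ Finset.range (a2 + 2),
          α2 j * (L (X ^ n) (X ^ (m + j)) - L' (X ^ n) (X ^ (m + j)))
        = (m : ℂ) * ∑ j ∈ Finset.range (b2 + 2),
            β2 j * (L (X ^ n) (X ^ (m - 1 + j)) - L' (X ^ n) (X ^ (m - 1 + j)))
          + ∑ j ∈ Finset.range (b2 + 2),
            β2 j * (L (X ^ (n + 1)) (X ^ (m + j)) - L' (X ^ (n + 1)) (X ^ (m + j))) := by
    intro n m
    have h := sc_E2 a2 b2 α2 β2 L hL2 n m
    have h' := sc_E2 a2 b2 α2 β2 L' hL'2 n m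
    simp only [mul_sub, Finset.sum_sub_distrib]
    linear_combination h - h'
  have hbox : ∀ i ≤ a1, ∀ j ≤ a2,
      L (X ^ i) (X ^ j) - L' (X ^ i) (X ^ j) = 0 := fun i hi j hj =>
    sub_eq_zero.mpr (hinit i hi j hj)
  intro i j
  exact sub_eq_zero.mp (sc_key a1 b1 a2 b2 α1 β1 α2 β2 hα1 hα2 hdeg1 hdeg2 hborder
    (fun i j => L (X ^ i) (X ^ j) - L' (X ^ i) (X ^ j)) hE1 hE2 hbox i j)
end

section
/- Let $\mathcal{L}$ be a semiclassical bilinear functional with $A_2(y)=ay$ ($a\neq 0$) and $B_2(y)=1$. Then the linear moment functional $\mathcal{L}_r:\mathbb{C}[x]\to\mathbb{C}$ defined by $\mathcal{L}_r(p):=\mathcal{L}(p|1)$ is semiclassical with data $A(x)=A_1(x)-\frac{x}{a}B_1(x)$ and $B(x)=B_1(x)$, i.e., $\mathcal{L}_r(-B(x)p'(x)+A(x)p(x))=0$ for all polynomials $p$. -/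
open Polynomial

/-- a semiclassical bilinear functional with `A₂(y) = ay` (`a ≠ 0`) and
`B₂(y) = 1` restricts to a semiclassical linear moment functional
`L_r(p) := L(p|1)` with data `A = A₁ - (x/a)B₁`, `B = B₁`. -/
theorem stmt_15 (L : Polynomial ℂ →ₗ[ℂ] Polynomial ℂ →ₗ[ℂ] ℂ)
    (A1 B1 : Polynomial ℂ) (a : ℂ) (ha : a ≠ 0)
    (hsemi1 : ∀ p s : Polynomial ℂ,
      L (-(B1 * derivative p) + A1 * p) s = L (B1 * p) (X * s))
    (hsemi2 : ∀ p s : Polynomial ℂ,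
      L p (-derivative s + C a * X * s) = L (X * p) s) :
    ∀ p : Polynomial ℂ,
      L (-(B1 * derivative p) + (A1 - C a⁻¹ * X * B1) * p) 1 = 0 := by
  intro p
  have h2 := hsemi2 (B1 * p) 1
  simp only [derivative_one, neg_zero, zero_add, mul_one] at h2
  -- h2 : L (B1*p) (C a * X) = L (X*(B1*p)) 1
  have hCa : (C a * X : Polynomial ℂ) = a • X := by
    rw [smul_eq_C_mul]
  rw [hCa, map_smul, smul_eq_mul] at h2
  have h1 := hsemi1 p 1
  rw [mul_one] at h1
  have key : -(B1 * derivative p) + (A1 - C a⁻¹ * X * B1) * p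
      = (-(B1 * derivative p) + A1 * p) - a⁻¹ • (X * (B1 * p)) := by
    rw [smul_eq_C_mul]; ring
  rw [key, map_sub, map_smul, LinearMap.sub_apply, LinearMap.smul_apply, h1, ← h2,
    smul_eq_mul, ← mul_assoc, inv_mul_cancel₀ ha, one_mul, sub_self]
end

section
/- Let $\mathcal{L}$ be a semiclassical linear moment functional on $\mathbb{C}[x]$ with data $(A,B)$, i.e., $\mathcal{L}(-Bp'+Ap)=0$ for all polynomials $p$, and let $\mu_k=\mathcal{L}(x^k)$. Then the formal generating series $F(z)=\sum_{k\geq 0}\mu_k z^k/k!$ satisfies the formal ODE $[zB(d/dz)-A(d/dz)]F(z)=0$. -/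
/-!
On the exponential generating series `F_L = ∑ L(xᵏ) zᵏ/k!` of the moments of a functional `L`,
`d/dz` acts as `L ↦ L(x · _)` and multiplication by `z` as `L ↦ L((_)')`. Hence
`[z B(d/dz) - A(d/dz)] F_L` is the generating series of `p ↦ L(B p' - A p)`, which is zero.
-/

open Polynomial

namespace Polynomial

variable {K : Type*} [Field K]

noncomputable def momentSeries : (K[X] →ₗ[K] K) →ₗ[K] PowerSeries K where
  toFun L := PowerSeries.mk fun k => (k.factorial : K)⁻¹ * L (X ^ k)
  map_add' L M := by ext; simp [mul_add]
  map_smul' a L := by ext; simp [mul_left_comm]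

theorem coeff_momentSeries (L : K[X] →ₗ[K] K) (k : ℕ) :
    PowerSeries.coeff k (momentSeries L) = (k.factorial : K)⁻¹ * L (X ^ k) :=
  PowerSeries.coeff_mk k fun k => (k.factorial : K)⁻¹ * L (X ^ k)

theorem derivative_momentSeries [CharZero K] (L : K[X] →ₗ[K] K) :
    PowerSeries.derivative K (momentSeries L) = momentSeries (L ∘ₗ LinearMap.mulLeft K X) := by
  ext n
  simp only [PowerSeries.coeff_derivative, coeff_momentSeries, LinearMap.comp_apply,
    LinearMap.mulLeft_apply, ← pow_succ', Nat.factorial_succ]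
  push_cast
  field_simp

theorem X_mul_momentSeries [CharZero K] (L : K[X] →ₗ[K] K) :
    PowerSeries.X * momentSeries L = momentSeries (L ∘ₗ derivative) := by
  ext (_ | n)
  · simp [coeff_momentSeries]
  · simp only [PowerSeries.coeff_succ_X_mul, coeff_momentSeries, LinearMap.comp_apply,
      derivative_X_pow, ← smul_eq_C_mul, map_smul, smul_eq_mul, Nat.factorial_succ]
    push_cast
    field_simp

theorem aeval_derivative_momentSeries [CharZero K] (P : K[X]) (L : K[X] →ₗ[K] K) :
    aeval (PowerSeries.derivative K).toLinearMap P (momentSeries L) =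
      momentSeries (L ∘ₗ LinearMap.mulLeft K P) := by
  induction P using Polynomial.induction_on generalizing L with
  | C a =>
    ext k
    simp [coeff_momentSeries, ← smul_eq_C_mul, mul_left_comm]
  | add p q hp hq =>
    rw [map_add, LinearMap.add_apply, hp, hq, ← map_add, ← LinearMap.comp_add]
    congr 2
    ext
    simp [add_mul]
  | monomial n a ih =>
    rw [pow_succ, ← mul_assoc, map_mul, aeval_X, Module.End.mul_apply, Derivation.coeFn_coe,
      derivative_momentSeries, ih, LinearMap.comp_assoc, ← LinearMap.mulLeft_mul, mul_comm X]

end Polynomial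

/-- the generating series `F(z) = ∑ μ_k z^k/k!` of a semiclassical linear
moment functional with data `(A,B)` satisfies the formal ODE
`[z B(d/dz) - A(d/dz)] F = 0`. -/
theorem stmt_16 (A B : Polynomial ℂ) (L : Polynomial ℂ →ₗ[ℂ] ℂ)
    (hL : ∀ p : Polynomial ℂ,
      L (-(B * Polynomial.derivative p) + A * p) = 0) :
    letI F : PowerSeries ℂ :=
      PowerSeries.mk fun k => ((k.factorial : ℂ))⁻¹ * L (Polynomial.X ^ k)
    letI D : Module.End ℂ (PowerSeries ℂ) := (PowerSeries.derivative ℂ).toLinearMap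
    letI MX : Module.End ℂ (PowerSeries ℂ) := LinearMap.mulLeft ℂ PowerSeries.X
    (MX * Polynomial.aeval D B - Polynomial.aeval D A) F = 0 := by
  have hL₀ : L ∘ₗ (LinearMap.mulLeft ℂ B ∘ₗ derivative - LinearMap.mulLeft ℂ A) = 0 := by
    refine LinearMap.ext fun p => ?_
    simpa [neg_sub, sub_eq_neg_add] using congrArg Neg.neg (hL p)
  calc _ = PowerSeries.X * momentSeries (L ∘ₗ LinearMap.mulLeft ℂ B)
        - momentSeries (L ∘ₗ LinearMap.mulLeft ℂ A) := by
        simp only [LinearMap.sub_apply, Module.End.mul_apply]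
        rw [← aeval_derivative_momentSeries, ← aeval_derivative_momentSeries]
        rfl
    _ = momentSeries (L ∘ₗ (LinearMap.mulLeft ℂ B ∘ₗ derivative - LinearMap.mulLeft ℂ A)) := by
        rw [X_mul_momentSeries, LinearMap.comp_sub, map_sub, LinearMap.comp_assoc]
    _ = 0 := by rw [hL₀, map_zero]
end

section
/- Let $d\geq 1$, $A\in\mathbb{C}$, $\omega=e^{2\pi i/d}$, $K\neq 0$. The $[d/2]$ functions among $G_k(z)=K\sqrt{2\pi/d}\,z^{(2A+1-d)/(2d)}\omega^{k(A-1/2)}\exp\left[\frac{d}{d+1}z^{(d+1)/d}\omega^k\right]$, $k=0,\dots,d-1$, for which $\Re(z^{(d+1)/d}\omega^k)>0$ as $z\to\infty$ in the sector $\arg z\in(-\frac{\pi}{2(d+1)},0)$, are linearly independent, and no nontrivial linear combination of them is of exponential type in that sector (i.e., bounded by $|z|^Ce^{C|z|}$ for some constant $C$). -/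
/-!
Restrict everything to a ray `z = r e^{iθ}` inside the sector. There
`exp (d/(d+1) z^{(d+1)/d} ω^k) = exp (w_k r^{(d+1)/d})` with `Re w_k = d/(d+1) cos β_k`, and for
every `θ` in the sector the angles `β_k = (d+1)θ/d + 2πk/d`, `k < d`, have pairwise distinct
cosines. In a nontrivial combination the term with the largest `Re w_k` therefore dominates all
others, so the combination grows like `r^q exp (m r^{(d+1)/d})` with `m > 0`, faster than any
`r^{c₁} e^{c₂ r}`. Linear independence is the special case of the zero function.
-/

open Real Complex Filter Asymptotics Set

theorem isLittleO_cexp_mul_of_re_lt {α : Type*} {l : Filter α} {t : α → ℝ}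
    (ht : Tendsto t l atTop) {v w : ℂ} (hvw : v.re < w.re) :
    (fun x => cexp (v * t x)) =o[l] (fun x => cexp (w * t x)) := by
  rw [← isLittleO_norm_norm]
  simp only [Complex.norm_exp, Complex.re_mul_ofReal, Real.isLittleO_exp_comp_exp_comp]
  exact (ht.const_mul_atTop (sub_pos.2 hvw)).congr fun x => by ring

theorem isEquivalent_sum_cexp_of_dominant {ι α : Type*} {l : Filter α} {t : α → ℝ}
    (ht : Tendsto t l atTop) {S : Finset ι} {b w : ι → ℂ} {k₀ : ι} (hk₀ : k₀ ∈ S)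
    (hb : b k₀ ≠ 0) (hdom : ∀ k ∈ S, k ≠ k₀ → (w k).re < (w k₀).re) :
    (fun x => ∑ k ∈ S, b k * cexp (w k * t x)) ~[l] (fun x => b k₀ * cexp (w k₀ * t x)) := by
  classical
  have hrest : (fun x => ∑ k ∈ S.erase k₀, b k * cexp (w k * t x)) =o[l]
      (fun x => b k₀ * cexp (w k₀ * t x)) :=
    IsLittleO.fun_sum fun k hk =>
      ((isLittleO_cexp_mul_of_re_lt ht (hdom k (Finset.mem_of_mem_erase hk)
        (Finset.ne_of_mem_erase hk))).const_mul_left (b k)).const_mul_right hb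
  refine hrest.congr_left fun x => ?_
  rw [Pi.sub_apply, ← Finset.add_sum_erase S _ hk₀, add_sub_cancel_left]

theorem isLittleO_rpow_mul_exp_exp_mul_rpow {e m : ℝ} (he : 1 < e) (hm : 0 < m) (c₁ c₂ : ℝ) :
    (fun r : ℝ => r ^ c₁ * Real.exp (c₂ * r)) =o[atTop] (fun r => Real.exp (m * r ^ e)) := by
  have h₁ : (fun r : ℝ => r ^ c₁ * Real.exp (c₂ * r)) =o[atTop]
      (fun r => Real.exp ((1 + c₂) * r)) :=
    ((isLittleO_rpow_exp_pos_mul_atTop c₁ one_pos).mul_isBigO (isBigO_refl _ _)).congr_right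
      fun r => by rw [← Real.exp_add]; ring_nf
  have h₂ : (fun r : ℝ => Real.exp ((1 + c₂) * r)) =o[atTop] (fun r => Real.exp (m * r ^ e)) := by
    rw [Real.isLittleO_exp_comp_exp_comp]
    refine (tendsto_id.atTop_mul_atTop₀ (tendsto_atTop_add_const_right _ (-(1 + c₂))
      ((tendsto_rpow_atTop (sub_pos.2 he)).const_mul_atTop hm))).congr' ?_
    filter_upwards [eventually_gt_atTop 0] with r hr
    rw [id, Real.rpow_sub_one hr.ne']
    field_simp
    ring
  exact h₁.trans h₂

theorem not_isBigO_sum_cexp_mul_rpow {ι : Type*} {S : Finset ι} {b w : ι → ℂ} {e : ℝ}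
    (he : 1 < e) (hw : ∀ k ∈ S, 0 < (w k).re) (hinj : InjOn (fun k => (w k).re) S)
    (hb : ∃ k ∈ S, b k ≠ 0) (c₁ c₂ : ℝ) :
    ¬ (fun r : ℝ => ∑ k ∈ S, b k * cexp (w k * (r ^ e : ℝ))) =O[atTop]
      (fun r => r ^ c₁ * Real.exp (c₂ * r)) := by
  classical
  obtain ⟨k₀, hk₀, hmax⟩ := (S.filter (b · ≠ 0)).exists_max_image (fun k => (w k).re)
    (by simpa [Finset.filter_nonempty_iff] using hb)
  obtain ⟨hk₀S, hbk₀⟩ := Finset.mem_filter.1 hk₀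
  have hsum : ∀ r : ℝ, ∑ k ∈ S with b k ≠ 0, b k * cexp (w k * (r ^ e : ℝ)) =
      ∑ k ∈ S, b k * cexp (w k * (r ^ e : ℝ)) :=
    fun r => Finset.sum_filter_of_ne fun k _ h => left_ne_zero_of_mul h
  have hequiv := isEquivalent_sum_cexp_of_dominant (tendsto_rpow_atTop (by linarith)) hk₀ hbk₀
    fun k hk hne => (hmax k hk).lt_of_ne fun h => hne (hinj (Finset.mem_filter.1 hk).1 hk₀S h)
  have hmain : (fun r : ℝ => Real.exp ((w k₀).re * r ^ e)) =O[atTop]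
      (fun r : ℝ => b k₀ * cexp (w k₀ * (r ^ e : ℝ))) :=
    ((isBigO_norm_left.2 (isBigO_refl _ _)).congr_left fun r => by
      rw [Complex.norm_exp, Complex.re_mul_ofReal]).trans (isBigO_self_const_mul hbk₀ _ _)
  intro hO
  exact isLittleO_irrefl (.of_forall fun r => (Real.exp_pos _).ne')
    (hmain.trans (hequiv.isBigO_symm.trans (hO.congr_left fun r => (hsum r).symm))
      |>.trans_isLittleO (isLittleO_rpow_mul_exp_exp_mul_rpow he (hw k₀ hk₀S) c₁ c₂))

theorem Complex.ofReal_mul_cpow {r : ℝ} (hr : 0 < r) (z s : ℂ) :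
    ((r : ℂ) * z) ^ s = (r : ℂ) ^ s * z ^ s := by
  have hr' : (r : ℂ) ≠ 0 := ofReal_ne_zero.2 hr.ne'
  rcases eq_or_ne z 0 with rfl | hz
  · rcases eq_or_ne s 0 with rfl | hs <;> simp [*]
  rw [cpow_def_of_ne_zero (mul_ne_zero hr' hz), cpow_def_of_ne_zero hr', cpow_def_of_ne_zero hz,
    log_ofReal_mul hr hz, ← ofReal_log hr.le, add_mul, exp_add]

theorem Complex.arg_ofReal_mul_exp_mul_I {r : ℝ} (hr : 0 < r) {θ : ℝ} (hθ : θ ∈ Ioc (-π) π) :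
    ((r : ℂ) * exp (θ * I)).arg = θ := by
  rw [arg_real_mul _ hr, exp_mul_I, arg_cos_add_sin_mul_I hθ]

theorem Complex.norm_ofReal_mul_exp_mul_I {r : ℝ} (hr : 0 ≤ r) (θ : ℝ) :
    ‖(r : ℂ) * exp (θ * I)‖ = r := by
  rw [norm_mul, norm_exp_ofReal_mul_I, mul_one, norm_real, Real.norm_of_nonneg hr]

theorem norm_mul_ofReal_mul_cexp_cpow (c : ℂ) {r : ℝ} (hr : 0 < r) {θ : ℝ}
    (hθ : θ ∈ Ioc (-π) π) (p : ℂ) :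
    ‖c * ((r : ℂ) * cexp (θ * I)) ^ p‖ = ‖c‖ / Real.exp (θ * p.im) * r ^ p.re := by
  rw [norm_mul, Complex.norm_cpow_of_ne_zero
      (mul_ne_zero (ofReal_ne_zero.2 hr.ne') (Complex.exp_ne_zero _)),
    arg_ofReal_mul_exp_mul_I hr hθ, norm_ofReal_mul_exp_mul_I hr.le]
  ring

def sector (d : ℕ) : Set ℂ :=
  {z : ℂ | z ≠ 0 ∧ -(π / (2 * (d + 1))) < Complex.arg z ∧ Complex.arg z < 0}

noncomputable def unityRoot (d : ℕ) : ℂ := cexp (2 * π * I / d)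

noncomputable def expSolution (d : ℕ) (A K : ℂ) (k : ℕ) (z : ℂ) : ℂ :=
  K * (Real.sqrt (2 * π / d) : ℂ) * z ^ ((2 * A + 1 - d) / (2 * d)) *
    unityRoot d ^ ((k : ℂ) * (A - 1 / 2)) *
    cexp ((d : ℂ) / (d + 1) * z ^ (((d : ℂ) + 1) / d) * unityRoot d ^ k)

noncomputable def rayAngle (d : ℕ) (θ : ℝ) (k : ℕ) : ℝ := (d + 1) / d * θ + 2 * π * k / d

theorem Ioo_sector_subset_Ioc (d : ℕ) : Ioo (-(π / (2 * (d + 1)))) 0 ⊆ Ioc (-π) π := by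
  intro θ hθ
  have : π / (2 * (d + 1)) ≤ π :=
    div_le_self Real.pi_pos.le (by linarith [(d.cast_nonneg : (0 : ℝ) ≤ d)])
  exact ⟨by linarith [hθ.1], by linarith [hθ.2, Real.pi_pos]⟩

theorem ofReal_mul_cexp_mem_sector {d : ℕ} {θ : ℝ} (hθ : θ ∈ Ioo (-(π / (2 * (d + 1)))) 0)
    {r : ℝ} (hr : 0 < r) : (r : ℂ) * cexp (θ * I) ∈ sector d := by
  have harg := arg_ofReal_mul_exp_mul_I hr (Ioo_sector_subset_Ioc d hθ)
  exact ⟨mul_ne_zero (ofReal_ne_zero.2 hr.ne') (Complex.exp_ne_zero _),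
    by rw [harg]; exact hθ.1, by rw [harg]; exact hθ.2⟩

theorem re_cexp_mul_I_cpow_mul_unityRoot_pow {θ : ℝ} (hθ : θ ∈ Ioc (-π) π) (d k : ℕ) :
    (cexp (θ * I) ^ (((d : ℂ) + 1) / d) * unityRoot d ^ k).re = Real.cos (rayAngle d θ k) := by
  rw [Complex.cpow_def_of_ne_zero (Complex.exp_ne_zero _),
    Complex.log_exp (by simpa using hθ.1) (by simpa using hθ.2), unityRoot,
    ← Complex.exp_nat_mul, ← Complex.exp_add, ← Complex.exp_ofReal_mul_I_re, rayAngle]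
  congr 2
  push_cast
  ring

/- `cos β_k = cos β_k'` forces `β_k ∓ β_k' ∈ 2πℤ`: the difference `2π(k - k')/d` is not a
multiple of `2π` since `|k - k'| < d`, and the sum would put `(d+1)θ` in `πℤ ∩ (-π/2, 0) = ∅`. -/
theorem injOn_cos_rayAngle {d : ℕ} {θ : ℝ} (hθ : θ ∈ Ioo (-(π / (2 * (d + 1)))) 0) :
    InjOn (fun k => Real.cos (rayAngle d θ k)) (Iio d) := by
  intro k (hk : k < d) k' (hk' : k' < d) h
  have hd : (d : ℝ) ≠ 0 := Nat.cast_ne_zero.2 (by omega)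
  obtain ⟨n, hn | hn⟩ := Real.cos_eq_cos_iff.1 h <;> unfold rayAngle at hn
  · have hdiff : ((k' : ℤ) - k : ℤ) = n * d := by
      have : (k' : ℝ) - k = n * d := by
        field_simp at hn
        exact mul_left_cancel₀ Real.two_pi_pos.ne' (by linear_combination hn)
      exact_mod_cast this
    have := Int.eq_zero_of_abs_lt_dvd (m := d) ⟨n, by rw [hdiff]; ring⟩
      (abs_sub_lt_iff.2 ⟨by omega, by omega⟩)
    omega
  · have hangle : ((d : ℝ) + 1) * θ = π * ((n * d - k - k' : ℤ) : ℝ) := by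
      push_cast
      field_simp at hn
      linarith
    have hlo : -(π / 2) < ((d : ℝ) + 1) * θ := by
      have := mul_lt_mul_of_pos_left hθ.1 (by positivity : (0 : ℝ) < d + 1)
      field_simp at this ⊢
      linarith
    have hhi : ((d : ℝ) + 1) * θ < 0 := mul_neg_of_pos_of_neg (by positivity) hθ.2
    rw [hangle] at hlo hhi
    have hneg : ((n * d - k - k' : ℤ) : ℝ) < 0 := neg_of_mul_neg_right hhi Real.pi_pos.le
    have hle : ((n * d - k - k' : ℤ) : ℝ) ≤ -1 := by
      exact_mod_cast Int.le_sub_one_of_lt (by exact_mod_cast hneg : n * d - k - k' < (0 : ℤ))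
    nlinarith [Real.pi_pos]

theorem sum_mul_expSolution_ofReal_mul (d : ℕ) (A K : ℂ) (D : Finset ℕ) (C : ℕ → ℂ) {r : ℝ}
    (hr : 0 < r) (u : ℂ) :
    ∑ k ∈ D, C k * expSolution d A K k (r * u) =
      K * (Real.sqrt (2 * π / d) : ℂ) * (r * u) ^ ((2 * A + 1 - d) / (2 * d)) *
        ∑ k ∈ D, C k * unityRoot d ^ ((k : ℂ) * (A - 1 / 2)) *
          cexp ((d : ℂ) / (d + 1) * (u ^ (((d : ℂ) + 1) / d) * unityRoot d ^ k) *
            (r ^ (((d : ℝ) + 1) / d) : ℝ)) := by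
  rw [Finset.mul_sum]
  refine Finset.sum_congr rfl fun k _ => ?_
  rw [expSolution, Complex.ofReal_mul_cpow hr u (((d : ℂ) + 1) / d), Complex.ofReal_cpow hr.le]
  push_cast
  ring

theorem isBigO_ray_of_exp_type {d : ℕ} (hd : 1 ≤ d) (A : ℂ) {K : ℂ} (hK : K ≠ 0)
    (D : Finset ℕ) (C : ℕ → ℂ) {θ : ℝ} (hθ : θ ∈ Ioo (-(π / (2 * (d + 1)))) 0) {c₁ c₂ : ℝ}
    (hbound : ∀ z ∈ sector d, 1 ≤ ‖z‖ →
      ‖∑ k ∈ D, C k * expSolution d A K k z‖ ≤ ‖z‖ ^ c₁ * Real.exp (c₂ * ‖z‖)) :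
    (fun r : ℝ => ∑ k ∈ D, C k * unityRoot d ^ ((k : ℂ) * (A - 1 / 2)) *
        cexp ((d : ℂ) / (d + 1) * (cexp (θ * I) ^ (((d : ℂ) + 1) / d) * unityRoot d ^ k) *
          (r ^ (((d : ℝ) + 1) / d) : ℝ))) =O[atTop]
      (fun r => r ^ (c₁ - ((2 * A + 1 - d) / (2 * d)).re) * Real.exp (c₂ * r)) := by
  set p := (2 * A + 1 - d) / (2 * d)
  set M := ‖K * (Real.sqrt (2 * π / d) : ℂ)‖ / Real.exp (θ * p.im)
  have hM : 0 < M := by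
    have : (0 : ℝ) < Real.sqrt (2 * π / d) := Real.sqrt_pos.2 (by positivity)
    simp only [M, norm_mul, norm_real, Real.norm_of_nonneg this.le]
    positivity
  refine IsBigO.of_bound M⁻¹ ((eventually_ge_atTop 1).mono fun r hr => ?_)
  have hr₀ : 0 < r := by linarith
  have h := hbound (r * cexp (θ * I)) (ofReal_mul_cexp_mem_sector hθ hr₀)
    (by rw [norm_ofReal_mul_exp_mul_I hr₀.le]; exact hr)
  rw [sum_mul_expSolution_ofReal_mul d A K D C hr₀, norm_mul,
    norm_mul_ofReal_mul_cexp_cpow _ hr₀ (Ioo_sector_subset_Ioc d hθ),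
    norm_ofReal_mul_exp_mul_I hr₀.le] at h
  change M * r ^ p.re * _ ≤ _ at h
  rw [Real.norm_of_nonneg (by positivity), Real.rpow_sub hr₀, div_mul_eq_mul_div,
    ← div_eq_inv_mul, div_div, le_div_iff₀ (by positivity)]
  linarith

theorem not_exp_type_sum_mul_expSolution {d : ℕ} (hd : 1 ≤ d) (A : ℂ) {K : ℂ} (hK : K ≠ 0)
    {D : Finset ℕ}
    (hD : ∀ k ∈ D, k < d ∧ ∀ z ∈ sector d, 0 < (z ^ (((d : ℂ) + 1) / d) * unityRoot d ^ k).re)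
    {C : ℕ → ℂ} (hC : ∃ k ∈ D, C k ≠ 0) (c₁ c₂ : ℝ) :
    ¬ ∀ z ∈ sector d, 1 ≤ ‖z‖ →
      ‖∑ k ∈ D, C k * expSolution d A K k z‖ ≤ ‖z‖ ^ c₁ * Real.exp (c₂ * ‖z‖) := by
  intro hbound
  obtain ⟨θ, hθ⟩ : ∃ θ, θ ∈ Ioo (-(π / (2 * ((d : ℝ) + 1)))) 0 :=
    exists_between (neg_neg_of_pos (by positivity))
  set u := cexp (θ * I)
  have hu : u ∈ sector d := by simpa using ofReal_mul_cexp_mem_sector hθ one_pos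
  have hre : ∀ k : ℕ, ((d : ℂ) / (d + 1) * (u ^ (((d : ℂ) + 1) / d) * unityRoot d ^ k)).re =
      d / (d + 1) * (u ^ (((d : ℂ) + 1) / d) * unityRoot d ^ k).re := fun k => by
    rw [show (d : ℂ) / (d + 1) = ((d / (d + 1) : ℝ) : ℂ) by push_cast; rfl, re_ofReal_mul]
  have hcos : ∀ k : ℕ, (u ^ (((d : ℂ) + 1) / d) * unityRoot d ^ k).re =
      Real.cos (rayAngle d θ k) :=
    re_cexp_mul_I_cpow_mul_unityRoot_pow (Ioo_sector_subset_Ioc d hθ) d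
  refine not_isBigO_sum_cexp_mul_rpow (S := D) (e := ((d : ℝ) + 1) / d)
    (b := fun k => C k * unityRoot d ^ ((k : ℂ) * (A - 1 / 2)))
    (w := fun k => (d : ℂ) / (d + 1) * (u ^ (((d : ℂ) + 1) / d) * unityRoot d ^ k))
    ?_ ?_ ?_ ?_ _ c₂ (isBigO_ray_of_exp_type hd A hK D C hθ hbound)
  · rw [lt_div_iff₀ (by positivity)]
    linarith
  · exact fun k hk => by rw [hre]; exact mul_pos (by positivity) ((hD k hk).2 u hu)
  · intro k hk k' hk' h
    simp only [hre, hcos] at h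
    exact injOn_cos_rayAngle hθ (hD k hk).1 (hD k' hk').1
      (mul_left_cancel₀ (by positivity : (d : ℝ) / (d + 1) ≠ 0) h)
  · obtain ⟨k, hk, hCk⟩ := hC
    exact ⟨k, hk, mul_ne_zero hCk
      fun h => Complex.exp_ne_zero _ ((cpow_eq_zero_iff _ _).1 h).1⟩

/-- among the functions
`G_k(z) = K √(2π/d) z^{(2A+1-d)/(2d)} ω^{k(A-1/2)} exp[(d/(d+1)) z^{(d+1)/d} ω^k]`,
those `k` (collected in `D`) for which `Re(z^{(d+1)/d} ω^k) > 0` in the sector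
`arg z ∈ (-π/(2(d+1)), 0)` form a linearly independent family on the sector, and no
nontrivial linear combination of them is of exponential type there (i.e. bounded by
`|z|^{c₁} e^{c₂|z|}`). -/
theorem stmt_19 (d : ℕ) (hd : 1 ≤ d) (A K : ℂ) (hK : K ≠ 0) :
    letI ω : ℂ := Complex.exp (2 * π * I / d)
    letI Sec : Set ℂ :=
      {z : ℂ | z ≠ 0 ∧ -(π / (2 * (d + 1))) < Complex.arg z ∧ Complex.arg z < 0}
    letI G : ℕ → ℂ → ℂ := fun k z =>
      K * (Real.sqrt (2 * π / d) : ℂ) * z ^ ((2 * A + 1 - d) / (2 * d)) *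
        ω ^ ((k : ℂ) * (A - 1 / 2)) *
        Complex.exp ((d : ℂ) / (d + 1) * z ^ (((d : ℂ) + 1) / d) * ω ^ k)
    ∀ D : Finset ℕ,
      (∀ k : ℕ, k ∈ D ↔ k < d ∧ ∀ z ∈ Sec, 0 < (z ^ (((d : ℂ) + 1) / d) * ω ^ k).re) →
      (∀ C : ℕ → ℂ, (∀ z ∈ Sec, ∑ k ∈ D, C k * G k z = 0) → ∀ k ∈ D, C k = 0) ∧
      (∀ C : ℕ → ℂ, (∃ k ∈ D, C k ≠ 0) →
        ¬ ∃ c1 c2 : ℝ, ∀ z ∈ Sec, 1 ≤ ‖z‖ →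
          ‖∑ k ∈ D, C k * G k z‖ ≤
            ‖z‖ ^ c1 * Real.exp (c2 * ‖z‖)) := by
  intro D hD
  have hexp : ∀ C : ℕ → ℂ, (∃ k ∈ D, C k ≠ 0) → ¬ ∃ c1 c2 : ℝ, ∀ z ∈ sector d, 1 ≤ ‖z‖ →
      ‖∑ k ∈ D, C k * expSolution d A K k z‖ ≤ ‖z‖ ^ c1 * Real.exp (c2 * ‖z‖) :=
    fun C hC ⟨c₁, c₂, h⟩ =>
      not_exp_type_sum_mul_expSolution hd A hK (fun k hk => (hD k).1 hk) hC c₁ c₂ h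
  refine ⟨fun C hC k hk => by_contra fun hCk => hexp C ⟨k, hk, hCk⟩ ⟨0, 0, fun z hz _ => ?_⟩, hexp⟩
  rw [show ∑ k ∈ D, C k * expSolution d A K k z = 0 from hC z hz, norm_zero]
  positivity
end
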